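/- arXiv:math/0702736 — 3 statements merged into one kernel-verified Lean document; each statement's English description precedes it below -/
import Mathlib

section
/- Let T be a tree (a connected acyclic graph) and let a, b be automorphisms of T such that a and b are each elliptic (each fixes some vertex) but have no common fixed vertex. Then the product a·b is hyperbolic, i.e., a·b fixes no vertex. -/
/-!
If an automorphism `g` of a tree fixes a vertex `p`, it fixes the midpoint of `v` and `g v` for
every `v`: the median `c` of `p`, `v`, `g v` is equidistant from `v` and `g v` since `g` preserves
distances from `p`, and `g c` lies on the geodesic from `p` to `g v` at the same distance from `p`
as `c`, so `g c = c`. If `b (a v) = v`, then `a` fixes the midpoint of `v` and `a v` while `b`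
fixes the midpoint of `a v` and `b (a v) = v`; midpoints in a tree are unique, so this is a
common fixed vertex.
-/

namespace SimpleGraph

variable {V : Type*} {G : SimpleGraph V}

def IsMidpoint (G : SimpleGraph V) (x y m : V) : Prop :=
  G.dist x m = G.dist m y ∧ G.dist x m + G.dist m y = G.dist x y

lemma IsMidpoint.symm {x y m : V} (h : G.IsMidpoint x y m) : G.IsMidpoint y x m := by
  obtain ⟨h₁, h₂⟩ := h
  rw [IsMidpoint, dist_comm (u := y), dist_comm (v := x), dist_comm (u := y)]
  omega

lemma Iso.dist_apply_le {W : Type*} {G' : SimpleGraph W} (f : G ≃g G') (u v : V) :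
    G'.dist (f u) (f v) ≤ G.dist u v := by
  by_cases huv : G.Reachable u v
  · obtain ⟨p, hp⟩ := huv.exists_walk_length_eq_dist
    simpa [hp] using dist_le (p.map f.toHom)
  · rw [dist_eq_zero_of_not_reachable huv,
      dist_eq_zero_of_not_reachable (Iso.reachable_iff.not.mpr huv)]

lemma Iso.dist_apply {W : Type*} {G' : SimpleGraph W} (f : G ≃g G') (u v : V) :
    G'.dist (f u) (f v) = G.dist u v :=
  (f.dist_apply_le u v).antisymm (by simpa using f.symm.dist_apply_le (f u) (f v))

namespace IsAcyclic

variable (hG : G.IsAcyclic)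
include hG

lemma length_eq_dist_of_isPath {u v : V} {p : G.Walk u v} (hp : p.IsPath) :
    p.length = G.dist u v := by
  obtain ⟨q, hq, hql⟩ := p.reachable.exists_path_of_dist
  rw [← hql, Subtype.mk.inj <| (hG.subsingleton_path u v).elim ⟨p, hp⟩ ⟨q, hq⟩]

lemma eq_of_mem_support_of_snd_ne {u v w x : V} {p : G.Walk u v} {q : G.Walk u w}
    (hp : p.IsPath) (hq : q.IsPath) (hsnd : p.snd ≠ q.snd)
    (hxp : x ∈ p.support) (hxq : x ∈ q.support) : x = u := by
  classical
  by_contra hxu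
  have hpq := (hG.subsingleton_path u x).elim ⟨_, hp.takeUntil hxp⟩ ⟨_, hq.takeUntil hxq⟩
  apply hsnd
  rw [← p.snd_takeUntil hxu hxp, ← q.snd_takeUntil hxu hxq]
  exact congrArg (fun r : G.Path u x ↦ r.1.snd) hpq

lemma isPath_reverse_append_of_snd_ne {u v w : V} {p : G.Walk u v} {q : G.Walk u w}
    (hp : p.IsPath) (hq : q.IsPath) (hsnd : p.snd ≠ q.snd) :
    (p.reverse.append q).IsPath := by
  have hq' := hq.support_nodup
  rw [← q.cons_tail_support, List.nodup_cons] at hq'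
  rw [Walk.isPath_def, Walk.support_append, Walk.support_reverse]
  refine List.nodup_reverse.mpr hp.support_nodup |>.append hq'.2 fun x hxp hxq ↦ ?_
  rw [List.mem_reverse] at hxp
  obtain rfl := hG.eq_of_mem_support_of_snd_ne hp hq hsnd hxp (List.mem_of_mem_tail hxq)
  exact hq'.1 hxq

end IsAcyclic

namespace IsTree

variable (hT : G.IsTree)
include hT

lemma exists_median_of_isPath {z x y : V} {p : G.Walk z x} {q : G.Walk z y}
    (hp : p.IsPath) (hq : q.IsPath) :
    ∃ c, G.dist z c + G.dist c x = G.dist z x ∧ G.dist z c + G.dist c y = G.dist z y ∧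
      G.dist x c + G.dist c y = G.dist x y := by
  induction p with
  | @nil u => exact ⟨u, by simp, by simp, by simp⟩
  | @cons u u' x h p ih =>
    have hpu := hT.isAcyclic.length_eq_dist_of_isPath hp
    cases q with
    | nil => exact ⟨y, by simp, by simp, by simp⟩
    | @cons _ u'' y h' q =>
      have hqu := hT.isAcyclic.length_eq_dist_of_isPath hq
      by_cases hu : u' = u''
      · subst hu
        obtain ⟨c, hcx, hcy, hxy⟩ := ih hp.of_cons hq.of_cons
        have hpu' := hT.isAcyclic.length_eq_dist_of_isPath hp.of_cons
        have hqu' := hT.isAcyclic.length_eq_dist_of_isPath hq.of_cons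
        have huc : G.dist u c ≤ G.dist u u' + G.dist u' c := hT.connected.dist_triangle
        have hucx : G.dist u x ≤ G.dist u c + G.dist c x := hT.connected.dist_triangle
        have hucy : G.dist u y ≤ G.dist u c + G.dist c y := hT.connected.dist_triangle
        rw [dist_eq_one_iff_adj.mpr h] at huc
        simp only [Walk.length_cons] at hpu hqu
        exact ⟨c, by omega, by omega, hxy⟩
      · have hpq := hT.isAcyclic.length_eq_dist_of_isPath <|
          hT.isAcyclic.isPath_reverse_append_of_snd_ne hp hq (by simpa using hu)
        rw [Walk.length_append, Walk.length_reverse, hpu, hqu] at hpq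
        exact ⟨u, by simp, by simp, by simpa [dist_comm] using hpq⟩

lemma exists_median (x y z : V) :
    ∃ c, G.dist z c + G.dist c x = G.dist z x ∧ G.dist z c + G.dist c y = G.dist z y ∧
      G.dist x c + G.dist c y = G.dist x y := by
  obtain ⟨p, hp, -⟩ := hT.connected.exists_path_of_dist z x
  obtain ⟨q, hq, -⟩ := hT.connected.exists_path_of_dist z y
  exact hT.exists_median_of_isPath hp hq

lemma eq_of_dist_add_dist_eq {x y m n : V} (hm : G.dist x m + G.dist m y = G.dist x y)
    (hn : G.dist x n + G.dist n y = G.dist x y) (hmn : G.dist x m = G.dist x n) : m = n := by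
  obtain ⟨p₁, -, hp₁⟩ := hT.connected.exists_path_of_dist x m
  obtain ⟨p₂, -, hp₂⟩ := hT.connected.exists_path_of_dist m y
  obtain ⟨q₁, -, hq₁⟩ := hT.connected.exists_path_of_dist x n
  obtain ⟨q₂, -, hq₂⟩ := hT.connected.exists_path_of_dist n y
  have hp : (p₁.append p₂).IsPath := Walk.isPath_of_length_eq_dist _ (by simp [hp₁, hp₂, hm])
  have hq : (q₁.append q₂).IsPath := Walk.isPath_of_length_eq_dist _ (by simp [hq₁, hq₂, hn])
  have hpq : p₁.append p₂ = q₁.append q₂ :=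
    Subtype.mk.inj <| (hT.isAcyclic.subsingleton_path x y).elim ⟨_, hp⟩ ⟨_, hq⟩
  have hgetm : (p₁.append p₂).getVert (G.dist x m) = m := by simp [← hp₁, Walk.getVert_append']
  have hgetn : (q₁.append q₂).getVert (G.dist x n) = n := by simp [← hq₁, Walk.getVert_append']
  rw [← hgetm, ← hgetn, hpq, hmn]

lemma exists_fixed_isMidpoint (g : G ≃g G) {p : V} (hp : g p = p) (v : V) :
    ∃ m, g m = m ∧ G.IsMidpoint v (g v) m := by
  obtain ⟨c, hcv, hcgv, hvgv⟩ := hT.exists_median v (g v) p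
  have hgv : G.dist p (g v) = G.dist p v := by simpa [hp] using g.dist_apply p v
  have hgc : g c = c := by
    refine hT.eq_of_dist_add_dist_eq (x := p) (y := g v) ?_ hcgv ?_
    · rw [← hp, g.dist_apply, g.dist_apply, g.dist_apply]
      exact hcv
    · simpa [hp] using g.dist_apply p c
  refine ⟨c, hgc, ?_, hvgv⟩
  rw [dist_comm (u := v)]
  omega

lemma isMidpoint_unique {x y m n : V} (hm : G.IsMidpoint x y m) (hn : G.IsMidpoint x y n) :
    m = n := by
  obtain ⟨hm₁, hm₂⟩ := hm
  obtain ⟨hn₁, hn₂⟩ := hn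
  exact hT.eq_of_dist_add_dist_eq hm₂ hn₂ (by omega)

end IsTree

end SimpleGraph

/-- If `a` and `b` are elliptic automorphisms of a tree (each fixes a vertex)
with no common fixed vertex, then the product `a·b` (first `a`, then `b`)
is hyperbolic, i.e. it fixes no vertex. -/
theorem elliptic_mul_elliptic_no_common_fixed_is_hyperbolic
    {V : Type*} (G : SimpleGraph V) (hconn : G.Connected) (hac : G.IsAcyclic)
    (a b : G ≃g G)
    (ha : ∃ v, a v = v) (hb : ∃ v, b v = v)
    (hcommon : ¬ ∃ v, a v = v ∧ b v = v) :
    ∀ v : V, b (a v) ≠ v := by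
  intro v hv
  obtain ⟨p, hp⟩ := ha
  obtain ⟨q, hq⟩ := hb
  have hT : G.IsTree := ⟨hconn, hac⟩
  obtain ⟨m, ham, hm⟩ := hT.exists_fixed_isMidpoint a hp v
  obtain ⟨n, hbn, hn⟩ := hT.exists_fixed_isMidpoint b hq (a v)
  rw [hv] at hn
  exact hcommon ⟨m, ham, hT.isMidpoint_unique hm hn.symm ▸ hbn⟩
end

section
/- Let V be a finite rooted tree in which the root has d ≥ 3 children, and let x, y be two distinct children of the root. Let X be the subgroup of Aut(V) consisting of automorphisms fixing pointwise all descendants of x (including x), and Y the subgroup fixing pointwise all descendants of y (including y). If V is spherically homogeneous (all vertices at the same level have the same number of children), then X and Y together generate Aut(V). -/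
/-!
Since every vertex label is bounded only in terms of its level, exchanging two first letters is
an automorphism, and it fixes the subtree below every level-one vertex with a third first letter.
As the root has at least three children, such transpositions, or a product of two of them, move
`x` to any level-one vertex inside `X ⊔ Y`; automorphisms preserve levels, so we may assume that
`σ` fixes `x`. Then `σ` stabilises the subtree below `x`, and the automorphism `τ` acting as `σ`
there and trivially elsewhere lies in `Y`, while `τ⁻¹ σ` lies in `X`.
-/

/-- The vertices of the finite spherically homogeneous rooted tree
`T(e 0, …, e (L-1))`: sequences `s` of length at most `L` whose `i`-th entry
is a child-index smaller than `e i`.  The root is the empty sequence and the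
children of a vertex `s` of level `< L` are the vertices `s ++ [k]`. -/
def RVtx (e : ℕ → ℕ) (L : ℕ) : Type :=
  {s : List ℕ // s.length ≤ L ∧ ∀ i, i < s.length → s.getD i 0 < e i}

/-- The automorphism group of the rooted tree `T(e 0, …, e (L-1))`:
permutations of the vertices preserving the descendant (prefix) relation. -/
def rootedAut (e : ℕ → ℕ) (L : ℕ) : Subgroup (Equiv.Perm (RVtx e L)) where
  carrier := {σ | ∀ v w : RVtx e L, v.1 <+: w.1 ↔ (σ v).1 <+: (σ w).1}
  one_mem' := by intro v w; simp
  mul_mem' := by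
    intro a b ha hb v w
    exact (hb v w).trans (ha (b v) (b w))
  inv_mem' := by
    intro a ha v w
    have h := ha (a⁻¹ v) (a⁻¹ w)
    simpa using h.symm

open Equiv

namespace RVtx

variable {e : ℕ → ℕ} {L : ℕ}

def root : RVtx e L := ⟨[], by simp⟩

def take (v : RVtx e L) (n : ℕ) : RVtx e L :=
  ⟨v.1.take n, (List.length_take_le' _ _).trans v.2.1, fun i hi => by
    have hv := v.2.2 i (hi.trans_le (List.length_take_le' _ _))
    rw [List.length_take] at hi
    simpa [List.getD_eq_getElem?_getD, List.getElem?_take, (lt_min_iff.mp hi).1] using hv⟩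

theorem lt_of_val_eq_singleton {v : RVtx e L} {a : ℕ} (hv : v.1 = [a]) : a < e 0 := by
  simpa [hv] using v.2.2 0 (by simp [hv])

theorem val_eq_nil_iff (v : RVtx e L) : v.1 = [] ↔ ∀ w : RVtx e L, v.1 <+: w.1 :=
  ⟨fun h _ => h ▸ List.nil_prefix, fun h => List.prefix_nil.mp (h root)⟩

theorem length_val_eq_one_iff (v : RVtx e L) :
    v.1.length = 1 ↔ v.1 ≠ [] ∧ ∀ w : RVtx e L, w.1 <+: v.1 → w.1 = [] ∨ w = v := by
  constructor
  · intro hv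
    obtain ⟨a, ha⟩ := List.length_eq_one_iff.mp hv
    refine ⟨by simp [ha], fun w hw => ?_⟩
    rw [ha, List.prefix_cons_iff] at hw
    obtain hw | ⟨t, hwt, ht⟩ := hw
    · exact .inl hw
    · exact .inr (Subtype.ext (by rw [hwt, List.prefix_nil.mp ht, ha]))
  · rintro ⟨hne, hpre⟩
    have hpos : 0 < v.1.length := List.length_pos_iff.mpr hne
    by_contra hlen
    obtain h | h := hpre (v.take 1) (List.take_prefix _ _)
    · simp [take, hne] at h
    · have := congrArg (fun w : RVtx e L => w.1.length) h
      simp [take] at this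
      omega

theorem not_prefix_of_length_eq {x y : RVtx e L} (h : x.1.length = y.1.length) (hxy : x ≠ y) :
    ¬ x.1 <+: y.1 :=
  fun hp => hxy (Subtype.ext (hp.eq_of_length h))

theorem getD_modifyHead_swap_lt {u v : ℕ} (hu : u < e 0) (hv : v < e 0) {l : List ℕ}
    (hl : ∀ i, i < l.length → l.getD i 0 < e i) (i : ℕ)
    (hi : i < (l.modifyHead (swap u v)).length) : (l.modifyHead (swap u v)).getD i 0 < e i := by
  rcases l with _ | ⟨k, t⟩
  · simp at hi
  · rcases i with _ | i
    · have hk : k < e 0 := by simpa using hl 0 (by simp)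
      simp [swap_apply_def, apply_ite (· < e 0), hu, hv, hk]
    · simpa using hl (i + 1) (by simpa using hi)

end RVtx

theorem List.IsPrefix.modifyHead {α : Type*} {s t : List α} (h : s <+: t) (f : α → α) :
    s.modifyHead f <+: t.modifyHead f := by
  obtain ⟨r, rfl⟩ := h
  cases s with
  | nil => exact List.nil_prefix
  | cons a s => exact ⟨r, by simp⟩

theorem List.modifyHead_involutive {α : Type*} {f : α → α} (hf : Function.Involutive f) :
    Function.Involutive (List.modifyHead f) := by
  rintro (_ | ⟨a, l⟩)
  · rfl
  · simp [hf a]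

theorem List.prefix_iff_prefix_of_not_prefix {α : Type*} {x v w : List α} (hw : x <+: w)
    (hv : ¬ x <+: v) : v <+: w ↔ v <+: x :=
  ⟨fun h => (List.prefix_or_prefix_of_prefix h hw).resolve_right hv, fun h => h.trans hw⟩

namespace rootedAut

open RVtx

variable {e : ℕ → ℕ} {L : ℕ}

theorem val_apply_eq_nil_iff {σ : Perm (RVtx e L)} (hσ : σ ∈ rootedAut e L) (v : RVtx e L) :
    (σ v).1 = [] ↔ v.1 = [] := by
  rw [val_eq_nil_iff, val_eq_nil_iff, ← σ.forall_congr_right]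
  exact forall_congr' fun w => (hσ v w).symm

theorem length_apply_eq_one {σ : Perm (RVtx e L)} (hσ : σ ∈ rootedAut e L) {v : RVtx e L}
    (hv : v.1.length = 1) : (σ v).1.length = 1 := by
  rw [length_val_eq_one_iff] at hv ⊢
  obtain ⟨hne, hpre⟩ := hv
  refine ⟨by rwa [Ne, val_apply_eq_nil_iff hσ], fun w hw => ?_⟩
  rw [← σ.apply_symm_apply w, ← hσ] at hw
  obtain h | h := hpre _ hw
  · exact .inl (by rwa [← σ.apply_symm_apply w, val_apply_eq_nil_iff hσ])
  · exact .inr (by rw [← h, Equiv.apply_symm_apply])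

def fixingSubtree (x : RVtx e L) : Subgroup (Perm (RVtx e L)) where
  carrier := {σ | σ ∈ rootedAut e L ∧ ∀ z : RVtx e L, x.1 <+: z.1 → σ z = z}
  one_mem' := ⟨one_mem _, fun _ _ => rfl⟩
  mul_mem' ha hb := ⟨mul_mem ha.1 hb.1, fun z hz => by simp [hb.2 z hz, ha.2 z hz]⟩
  inv_mem' ha := ⟨inv_mem ha.1, fun z hz => Perm.inv_eq_iff_eq.mpr (ha.2 z hz).symm⟩

theorem fixingSubtree_le (x : RVtx e L) : fixingSubtree x ≤ rootedAut e L :=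
  fun _ h => h.1

def rootSwap (u v : ℕ) (hu : u < e 0) (hv : v < e 0) : Perm (RVtx e L) :=
  Function.Involutive.toPerm
    (fun w => ⟨w.1.modifyHead (swap u v), by simpa using w.2.1,
      getD_modifyHead_swap_lt hu hv w.2.2⟩)
    fun w => Subtype.ext (List.modifyHead_involutive (swap_apply_self u v) w.1)

theorem val_rootSwap (u v : ℕ) (hu : u < e 0) (hv : v < e 0) (w : RVtx e L) :
    (rootSwap u v hu hv w).1 = w.1.modifyHead (swap u v) := rfl

theorem rootSwap_mem (u v : ℕ) (hu : u < e 0) (hv : v < e 0) :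
    rootSwap u v hu hv ∈ rootedAut e L := by
  intro s t
  refine ⟨fun h => h.modifyHead _, fun h => ?_⟩
  simpa only [val_rootSwap, List.modifyHead_involutive (swap_apply_self u v) _] using
    h.modifyHead (swap u v)

theorem val_rootSwap_of_val_eq {u v : ℕ} (hu : u < e 0) (hv : v < e 0) {x : RVtx e L}
    (hx : x.1 = [u]) : (rootSwap u v hu hv x).1 = [v] := by
  simp [val_rootSwap, hx]

theorem rootSwap_mem_fixingSubtree {u v a : ℕ} (hu : u < e 0) (hv : v < e 0) {x : RVtx e L}
    (hx : x.1 = [a]) (hau : a ≠ u) (hav : a ≠ v) : rootSwap u v hu hv ∈ fixingSubtree x := by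
  refine ⟨rootSwap_mem u v hu hv, fun z hz => Subtype.ext ?_⟩
  obtain ⟨t, ht⟩ := hz
  simp [val_rootSwap, ← ht, hx, swap_apply_of_ne_of_ne hau hav]

theorem prefix_apply_iff {x : RVtx e L} {σ : Perm (RVtx e L)} (hσ : σ ∈ rootedAut e L)
    (hx : σ x = x) (z : RVtx e L) : x.1 <+: (σ z).1 ↔ x.1 <+: z.1 := by
  rw [hσ x z, hx]

section restrictSubtree

variable {x : RVtx e L} {σ : Perm (RVtx e L)} (hσ : σ ∈ rootedAut e L) (hx : σ x = x)

def restrictSubtree : Perm (RVtx e L) :=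
  Perm.ofSubtype (σ.subtypePerm (p := fun z => x.1 <+: z.1) (prefix_apply_iff hσ hx))

theorem restrictSubtree_apply_of_prefix {z : RVtx e L} (hz : x.1 <+: z.1) :
    restrictSubtree hσ hx z = σ z :=
  Perm.ofSubtype_subtypePerm_of_mem _ hz

theorem restrictSubtree_apply_of_not_prefix {z : RVtx e L} (hz : ¬ x.1 <+: z.1) :
    restrictSubtree hσ hx z = z :=
  Perm.ofSubtype_subtypePerm_of_not_mem _ hz

theorem restrictSubtree_mem : restrictSubtree hσ hx ∈ rootedAut e L := by
  have hmaps := prefix_apply_iff hσ hx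
  intro v w
  by_cases hv : x.1 <+: v.1 <;> by_cases hw : x.1 <+: w.1
  · rw [restrictSubtree_apply_of_prefix hσ hx hv, restrictSubtree_apply_of_prefix hσ hx hw]
    exact hσ v w
  · rw [restrictSubtree_apply_of_prefix hσ hx hv, restrictSubtree_apply_of_not_prefix hσ hx hw]
    exact iff_of_false (fun h => hw (hv.trans h)) (fun h => hw (((hmaps v).mpr hv).trans h))
  · rw [restrictSubtree_apply_of_not_prefix hσ hx hv, restrictSubtree_apply_of_prefix hσ hx hw,
      List.prefix_iff_prefix_of_not_prefix hw hv,
      List.prefix_iff_prefix_of_not_prefix ((hmaps w).mpr hw) hv]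
  · rw [restrictSubtree_apply_of_not_prefix hσ hx hv, restrictSubtree_apply_of_not_prefix hσ hx hw]

end restrictSubtree

theorem mem_sup_of_apply_eq_self {x y : RVtx e L} (hxy : ¬ x.1 <+: y.1) (hyx : ¬ y.1 <+: x.1)
    {σ : Perm (RVtx e L)} (hσ : σ ∈ rootedAut e L) (hx : σ x = x) :
    σ ∈ fixingSubtree x ⊔ fixingSubtree y := by
  set τ := restrictSubtree hσ hx
  have hτ : τ ∈ fixingSubtree y :=
    ⟨restrictSubtree_mem hσ hx, fun z hz => restrictSubtree_apply_of_not_prefix hσ hx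
      fun hxz => (List.prefix_or_prefix_of_prefix hxz hz).elim hxy hyx⟩
  have hτσ : τ⁻¹ * σ ∈ fixingSubtree x :=
    ⟨mul_mem (inv_mem hτ.1) hσ, fun z hz =>
      Perm.inv_eq_iff_eq.mpr (restrictSubtree_apply_of_prefix hσ hx hz).symm⟩
  simpa using mul_mem (Subgroup.mem_sup_right hτ) (Subgroup.mem_sup_left hτσ)

theorem exists_mem_sup_apply_eq (he0 : 3 ≤ e 0) {x y v : RVtx e L} (hx : x.1.length = 1)
    (hy : y.1.length = 1) (hxy : x ≠ y) (hv : v.1.length = 1) :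
    ∃ ρ ∈ fixingSubtree x ⊔ fixingSubtree y, ρ x = v := by
  obtain ⟨a, ha⟩ := List.length_eq_one_iff.mp hx
  obtain ⟨c, hc⟩ := List.length_eq_one_iff.mp hy
  obtain ⟨b, hb⟩ := List.length_eq_one_iff.mp hv
  have hac : a ≠ c := fun h => hxy (Subtype.ext (by rw [ha, hc, h]))
  have ha' := lt_of_val_eq_singleton ha
  have hc' := lt_of_val_eq_singleton hc
  have hb' := lt_of_val_eq_singleton hb
  by_cases hba : b = a
  · exact ⟨1, one_mem _, Subtype.ext (by rw [Perm.one_apply, ha, hb, hba])⟩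
  by_cases hbc : b = c
  · obtain ⟨d, hd, hda, hdc⟩ : ∃ d < e 0, d ≠ a ∧ d ≠ c := by
      by_contra! h
      have := h 0; have := h 1; have := h 2
      omega
    refine ⟨rootSwap d c hd hc' * rootSwap a d ha' hd,
      mul_mem (Subgroup.mem_sup_left (rootSwap_mem_fixingSubtree hd hc' ha hda.symm hac))
        (Subgroup.mem_sup_right (rootSwap_mem_fixingSubtree ha' hd hc hac.symm hdc.symm)),
      Subtype.ext ?_⟩
    rw [Perm.mul_apply, val_rootSwap_of_val_eq hd hc' (val_rootSwap_of_val_eq ha' hd ha), hb, hbc]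
  · exact ⟨rootSwap a b ha' hb',
      Subgroup.mem_sup_right (rootSwap_mem_fixingSubtree ha' hb' hc hac.symm (Ne.symm hbc)),
      Subtype.ext (by rw [val_rootSwap_of_val_eq ha' hb' ha, hb])⟩

end rootedAut

theorem two_pointwise_stabilizers_generate_general
    (L : ℕ) (e : ℕ → ℕ)
    (he0 : 3 ≤ e 0)
    (x y : RVtx e L) (hx : x.1.length = 1) (hy : y.1.length = 1) (hxy : x ≠ y) :
    Subgroup.closure
        ({σ : Equiv.Perm (RVtx e L) |
            σ ∈ rootedAut e L ∧ ∀ z : RVtx e L, x.1 <+: z.1 → σ z = z} ∪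
         {σ : Equiv.Perm (RVtx e L) |
            σ ∈ rootedAut e L ∧ ∀ z : RVtx e L, y.1 <+: z.1 → σ z = z})
      = rootedAut e L := by
  change Subgroup.closure
    ((rootedAut.fixingSubtree x : Set (Perm (RVtx e L))) ∪ rootedAut.fixingSubtree y) = _
  rw [Subgroup.closure_union, Subgroup.closure_eq, Subgroup.closure_eq]
  have hle : rootedAut.fixingSubtree x ⊔ rootedAut.fixingSubtree y ≤ rootedAut e L :=
    sup_le (rootedAut.fixingSubtree_le x) (rootedAut.fixingSubtree_le y)
  refine le_antisymm hle fun σ hσ => ?_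
  obtain ⟨ρ, hρ, hρx⟩ :=
    rootedAut.exists_mem_sup_apply_eq he0 hx hy hxy (rootedAut.length_apply_eq_one hσ hx)
  have hfix : (ρ⁻¹ * σ) x = x := Perm.inv_eq_iff_eq.mpr hρx.symm
  have hρσ := rootedAut.mem_sup_of_apply_eq_self
    (RVtx.not_prefix_of_length_eq (hx.trans hy.symm) hxy)
    (RVtx.not_prefix_of_length_eq (hy.trans hx.symm) hxy.symm)
    (mul_mem (inv_mem (hle hρ)) hσ) hfix
  simpa using mul_mem hρ hρσ

/-- Lemma `techno`: in the finite spherically homogeneous rooted tree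
`V = T(e 0, …, e (L-1))` with `e 0 ≥ 3`, if `x` and `y` are distinct level-one
vertices, then the subgroup of automorphisms fixing pointwise `x` and all its
descendants together with the subgroup fixing pointwise `y` and all its
descendants generate the full automorphism group `Aut(V)`. -/
theorem two_pointwise_stabilizers_generate
    (L : ℕ) (e : ℕ → ℕ) (hL : 1 ≤ L) (he : ∀ i, i < L → 1 ≤ e i)
    (he0 : 3 ≤ e 0)
    (x y : RVtx e L) (hx : x.1.length = 1) (hy : y.1.length = 1) (hxy : x ≠ y) :
    Subgroup.closure
        ({σ : Equiv.Perm (RVtx e L) |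
            σ ∈ rootedAut e L ∧ ∀ z : RVtx e L, x.1 <+: z.1 → σ z = z} ∪
         {σ : Equiv.Perm (RVtx e L) |
            σ ∈ rootedAut e L ∧ ∀ z : RVtx e L, y.1 <+: z.1 → σ z = z})
      = rootedAut e L :=
  two_pointwise_stabilizers_generate_general L e he0 x y hx hy hxy
end

section
/- Let G be a topologically simple topological group, O < G an open subgroup, Γ < G a dense subgroup, and Λ = Γ ∩ O. Then the action of Γ on the coset space Γ/Λ by right translation is subnormal transitive: every nontrivial subnormal subgroup N of Γ acts transitively on Γ/Λ. -/
open scoped Pointwise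

/-!
Conjugation is continuous, so the closure of a subgroup normalized by a dense subgroup is
normal in `G`; by topological simplicity each term of the subnormal chain from `Γ` down to `N`
is therefore dense or trivial. A dense `N` meets every coset `γ O` of the open subgroup `O`.
-/

/-- `N` is subnormal in `Γ` (as subgroups of an ambient group `G`): there is a
finite chain `N = c n ⊴ c (n-1) ⊴ … ⊴ c 0 = Γ` of successive normal
subgroups. -/
def IsSubnormalIn {G : Type*} [Group G] (N Γ : Subgroup G) : Prop :=
  ∃ (n : ℕ) (c : ℕ → Subgroup G), c 0 = Γ ∧ c n = N ∧
    ∀ i < n, c (i + 1) ≤ c i ∧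
      ∀ x ∈ c i, ∀ h ∈ c (i + 1), x * h * x⁻¹ ∈ c (i + 1)

section TopologicalGroup

variable {G : Type*} [Group G] [TopologicalSpace G]

theorem Subgroup.topologicalClosure_normal_of_dense_normalizing [IsTopologicalGroup G]
    {H K : Subgroup G} (hK : Dense (K : Set G))
    (hconj : ∀ x ∈ K, ∀ h ∈ H, x * h * x⁻¹ ∈ H) : H.topologicalClosure.Normal := by
  have conj_mem_closure : ∀ h ∈ H, ∀ g : G, g * h * g⁻¹ ∈ H.topologicalClosure :=
    fun h hh g => map_mem_closure (f := fun x => x * h * x⁻¹) (by fun_prop)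
      (hK.closure_eq ▸ Set.mem_univ g) fun x hx => hconj x hx h hh
  exact ⟨fun k hk g => Set.MapsTo.closure_left (f := fun x => g * x * g⁻¹)
    (fun h hh => conj_mem_closure h hh g) (by fun_prop) H.isClosed_topologicalClosure hk⟩

theorem Subgroup.dense_or_eq_bot_of_dense_normalizing [IsTopologicalGroup G]
    (hsimple : ∀ H : Subgroup G, H.Normal → IsClosed (H : Set G) → H = ⊥ ∨ H = ⊤)
    {H K : Subgroup G} (hK : Dense (K : Set G))
    (hconj : ∀ x ∈ K, ∀ h ∈ H, x * h * x⁻¹ ∈ H) : Dense (H : Set G) ∨ H = ⊥ := by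
  rcases hsimple _ (H.topologicalClosure_normal_of_dense_normalizing hK hconj)
    H.isClosed_topologicalClosure with hbot | htop
  · exact Or.inr (le_bot_iff.mp (hbot ▸ H.le_topologicalClosure))
  · exact Or.inl (dense_iff_closure_eq.mpr (congrArg SetLike.coe htop))

theorem IsSubnormalIn.dense_or_eq_bot [IsTopologicalGroup G]
    (hsimple : ∀ H : Subgroup G, H.Normal → IsClosed (H : Set G) → H = ⊥ ∨ H = ⊤)
    {N Γ : Subgroup G} (hsub : IsSubnormalIn N Γ) (hΓ : Dense (Γ : Set G)) :
    Dense (N : Set G) ∨ N = ⊥ := by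
  obtain ⟨n, c, rfl, rfl, hstep⟩ := hsub
  suffices ∀ i ≤ n, Dense (c i : Set G) ∨ c i = ⊥ from this n le_rfl
  intro i
  induction i with
  | zero => exact fun _ => Or.inl hΓ
  | succ i ih =>
    intro hi
    obtain ⟨hle, hconj⟩ := hstep i hi
    rcases ih (Nat.le_of_succ_le hi) with hdense | hbot
    · exact Subgroup.dense_or_eq_bot_of_dense_normalizing hsimple hdense hconj
    · exact Or.inr (le_bot_iff.mp (hbot ▸ hle))

theorem Subgroup.mul_inter_eq_of_dense_of_isOpen [ContinuousMul G] {N Γ O : Subgroup G}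
    (hN : Dense (N : Set G)) (hNΓ : N ≤ Γ) (hO : IsOpen (O : Set G)) :
    (N : Set G) * ((Γ : Set G) ∩ O) = Γ := by
  refine Set.Subset.antisymm ?_ fun γ hγ => ?_
  · rintro _ ⟨x, hx, y, ⟨hy, -⟩, rfl⟩
    exact Γ.mul_mem (hNΓ hx) hy
  · obtain ⟨x, hxN, hx⟩ := hN.exists_mem_open (hO.preimage (continuous_const_mul γ⁻¹))
      ⟨γ, by simp⟩
    have hxγ : x⁻¹ * γ ∈ O := by simpa using O.inv_mem hx
    exact ⟨x, hxN, x⁻¹ * γ, ⟨Γ.mul_mem (Γ.inv_mem (hNΓ hxN)) hγ, hxγ⟩, mul_inv_cancel_left x γ⟩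

end TopologicalGroup

theorem subnormal_transitive_of_dense_general
    {G : Type*} [Group G] [TopologicalSpace G] [IsTopologicalGroup G]
    (hsimple : ∀ H : Subgroup G, H.Normal → IsClosed (H : Set G) → H = ⊥ ∨ H = ⊤)
    (O : Subgroup G) (hO : IsOpen (O : Set G))
    (Γ : Subgroup G) (hΓ : Dense (Γ : Set G))
    (N : Subgroup G) (hNΓ : N ≤ Γ) (hsub : IsSubnormalIn N Γ) (hN : N ≠ ⊥) :
    (N : Set G) * ((Γ : Set G) ∩ (O : Set G)) = (Γ : Set G) :=
  have hNdense : Dense (N : Set G) := (hsub.dense_or_eq_bot hsimple hΓ).resolve_right hN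
  Subgroup.mul_inter_eq_of_dense_of_isOpen hNdense hNΓ hO

/-- Let `G` be a topologically simple topological group, `O` a proper open
subgroup, `Γ` a dense subgroup and `Λ = Γ ∩ O`.  Then the right coset action of
`Γ` on `Γ/Λ` is subnormal transitive: every nontrivial subnormal subgroup `N`
of `Γ` acts transitively, i.e. `N·Λ = Γ`. -/
theorem subnormal_transitive_of_dense
    {G : Type*} [Group G] [TopologicalSpace G] [IsTopologicalGroup G]
    (hsimple : ∀ H : Subgroup G, H.Normal → IsClosed (H : Set G) → H = ⊥ ∨ H = ⊤)
    (O : Subgroup G) (hO : IsOpen (O : Set G)) (hOproper : O ≠ ⊤)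
    (Γ : Subgroup G) (hΓ : Dense (Γ : Set G))
    (N : Subgroup G) (hNΓ : N ≤ Γ) (hsub : IsSubnormalIn N Γ) (hN : N ≠ ⊥) :
    (N : Set G) * ((Γ : Set G) ∩ (O : Set G)) = (Γ : Set G) :=
  subnormal_transitive_of_dense_general hsimple O hO Γ hΓ N hNΓ hsub hN
end
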